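/- arXiv:2007.05451 — 4 statements merged into one kernel-verified Lean document; each statement's English description precedes it below -/
import Mathlib

section
/- Let R₂ = (ℤ/2)[t, w] be the polynomial ring over the field with two elements in two variables, and let I₂ ⊆ R₂ be the ideal generated by t^9 + w^2·t and w^3 + w^2·t^4 + w·t^8. Then t^16 ∈ I₂. -/
open MvPolynomial

/-- `t`, the degree-2 generator of the mod 2 cohomology ring of EIII. -/
noncomputable def t : MvPolynomial (Fin 2) (ZMod 2) := X 0

/-- `w`, the degree-8 generator of the mod 2 cohomology ring of EIII. -/
noncomputable def w : MvPolynomial (Fin 2) (ZMod 2) := X 1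

/-- The ideal of relations in the mod 2 cohomology ring of EIII. -/
noncomputable def I₂ : Ideal (MvPolynomial (Fin 2) (ZMod 2)) :=
  Ideal.span {t ^ 9 + w ^ 2 * t, w ^ 3 + w ^ 2 * t ^ 4 + w * t ^ 8}

/- Expanding, the two products differ from `t ^ 16` by `2 * (w ^ 2 * t ^ 8 + w * t ^ 12 + w ^ 3 * t ^ 4)`. -/
theorem pow_sixteen_eq_of_charTwo {R : Type*} [CommRing R] [CharP R 2] (t w : R) :
    (t ^ 7 + w * t ^ 3) * (t ^ 9 + w ^ 2 * t) + t ^ 4 * (w ^ 3 + w ^ 2 * t ^ 4 + w * t ^ 8) =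
      t ^ 16 := by
  linear_combination (w ^ 2 * t ^ 8 + w * t ^ 12 + w ^ 3 * t ^ 4) * CharTwo.two_eq_zero (R := R)

theorem stmt_7 : t ^ 16 ∈ I₂ :=
  Ideal.mem_span_pair.mpr ⟨_, _, pow_sixteen_eq_of_charTwo t w⟩
end

section
/- Let R₂ = (ℤ/2)[t, w] be the polynomial ring over the field with two elements in two variables, and let I₂ ⊆ R₂ be the ideal generated by t^9 + w^2·t and w^3 + w^2·t^4 + w·t^8. Then t^12·w ∉ I₂, i.e. the image of t^12·w in R₂/I₂ is nonzero. -/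
open MvPolynomial

/-!
The functional `φ = coeff (t¹²w) + coeff (t⁴w³) + coeff (w⁴)` kills `I₂`: multiplying a monomial
by either relation produces an even number of the three monomials `t¹²w`, `t⁴w³`, `w⁴`
(namely two, for the multipliers `t³w` of the first relation and `t⁴`, `w` of the second).
Since `φ (t¹²w) = 1`, the monomial `t¹²w` is not in `I₂`.
-/

section Bivariate

variable {R : Type*} [CommSemiring R]

noncomputable abbrev biexp (i j : ℕ) : Fin 2 →₀ ℕ := Finsupp.single 0 i + Finsupp.single 1 j

theorem X_pow_mul_X_pow_eq_monomial (i j : ℕ) :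
    (X 0 ^ i * X 1 ^ j : MvPolynomial (Fin 2) R) = monomial (biexp i j) 1 := by
  rw [X_pow_eq_monomial, X_pow_eq_monomial, monomial_mul, one_mul]

theorem biexp_inj {i j k l : ℕ} : biexp i j = biexp k l ↔ i = k ∧ j = l := by
  simp [Finsupp.ext_iff, Fin.forall_fin_two]

theorem biexp_le_biexp_iff {i j k l : ℕ} : biexp k l ≤ biexp i j ↔ k ≤ i ∧ l ≤ j := by
  simp [Finsupp.le_def, Fin.forall_fin_two]

theorem biexp_sub_biexp (i j k l : ℕ) : biexp i j - biexp k l = biexp (i - k) (j - l) := by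
  ext n; fin_cases n <;> simp [Finsupp.tsub_apply]

theorem coeff_biexp_mul_X_pow_mul_X_pow (i j k l : ℕ) (a : MvPolynomial (Fin 2) R) :
    coeff (biexp i j) (a * (X 0 ^ k * X 1 ^ l)) =
      if k ≤ i ∧ l ≤ j then coeff (biexp (i - k) (j - l)) a else 0 := by
  simp only [X_pow_mul_X_pow_eq_monomial, coeff_mul_monomial', biexp_le_biexp_iff,
    biexp_sub_biexp, mul_one]

end Bivariate

noncomputable def topFunctional (p : MvPolynomial (Fin 2) (ZMod 2)) : ZMod 2 :=
  coeff (biexp 12 1) p + coeff (biexp 4 3) p + coeff (biexp 0 4) p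

theorem topFunctional_add (p q : MvPolynomial (Fin 2) (ZMod 2)) :
    topFunctional (p + q) = topFunctional p + topFunctional q := by
  simp only [topFunctional, coeff_add]; ring

theorem topFunctional_mul_first_relation (a : MvPolynomial (Fin 2) (ZMod 2)) :
    topFunctional (a * (t ^ 9 + w ^ 2 * t)) = 0 := by
  have : t ^ 9 + w ^ 2 * t = X 0 ^ 9 * X 1 ^ 0 + X 0 ^ 1 * X 1 ^ 2 := by simp [t, w]; ring
  simp only [this, topFunctional, mul_add, coeff_add, coeff_biexp_mul_X_pow_mul_X_pow]
  norm_num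
  ring_nf
  reduce_mod_char

theorem topFunctional_mul_second_relation (b : MvPolynomial (Fin 2) (ZMod 2)) :
    topFunctional (b * (w ^ 3 + w ^ 2 * t ^ 4 + w * t ^ 8)) = 0 := by
  have : w ^ 3 + w ^ 2 * t ^ 4 + w * t ^ 8 =
      X 0 ^ 0 * X 1 ^ 3 + X 0 ^ 4 * X 1 ^ 2 + X 0 ^ 8 * X 1 ^ 1 := by simp [t, w]; ring
  simp only [this, topFunctional, mul_add, coeff_add, coeff_biexp_mul_X_pow_mul_X_pow]
  norm_num
  ring_nf
  reduce_mod_char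

theorem topFunctional_eq_zero_of_mem {p : MvPolynomial (Fin 2) (ZMod 2)} (hp : p ∈ I₂) :
    topFunctional p = 0 := by
  obtain ⟨a, b, rfl⟩ := Ideal.mem_span_pair.mp hp
  rw [topFunctional_add, topFunctional_mul_first_relation, topFunctional_mul_second_relation,
    add_zero]

theorem topFunctional_t_pow_twelve_mul_w : topFunctional (t ^ 12 * w) = 1 := by
  rw [t, w, ← pow_one (X 1), X_pow_mul_X_pow_eq_monomial]
  simp [topFunctional, coeff_monomial, biexp_inj]

theorem stmt_11 : t ^ 12 * w ∉ I₂ := fun h =>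
  one_ne_zero (topFunctional_t_pow_twelve_mul_w ▸ topFunctional_eq_zero_of_mem h)
end

section
/- Let S = (ℤ/2)[y2, y3, y12, y16, y20] be the polynomial ring over the field with two elements in five variables, and let J ⊆ S be the ideal generated by the twelve elements: y3^3; y16·y2 + y12·y3^2 + y2^6·y3^2; y16·y3; y12^2·y2 + y12·y2^4·y3^2 + y20·y3^2; y12^2·y3; y12·y16 + y2^14 + y12·y2^5·y3^2 + y2^11·y3^2; y12^3 + y16·y20 + y2^5·y20·y3^2; y12^2·y16 + y20^2 + y12·y2^11·y3^2; y12^2·y20 + y12·y2^13·y3^2 + y12·y2^3·y20·y3^2; y12·y16^2 + y12·y2^13·y3^2; y16^3 + y12·y16·y20 + y12·y2^5·y20·y3^2; y16^2·y20 + y2^13·y20·y3^2. Then y16^4 + y2^2·y20^3 ∈ J, i.e. y16^4 and y2^2·y20^3 have the same image in S/J. -/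
/-!
Modulo `J`, both `y16 ^ 4` and `-(y2 ^ 2 * y20 ^ 3)` reduce to `y12 * y2 ^ 13 * y3 ^ 2 * y20`:
rewrite `y16 ^ 4` with the relations for `y16 ^ 3` and `y12 * y16 ^ 2`, and `y2 ^ 2 * y20 ^ 3` with
those for `y20 ^ 2` and `y12 ^ 2 * y20`; every leftover term is a multiple of `y16 * y3`.
The identities hold over any commutative ring, so characteristic 2 is never used.
-/

open MvPolynomial

/-- `y2`, the degree-2 generator of the mod 2 cohomology ring of EVI. -/
noncomputable def y2 : MvPolynomial (Fin 5) (ZMod 2) := X 0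

/-- `y3`, the degree-3 generator of the mod 2 cohomology ring of EVI. -/
noncomputable def y3 : MvPolynomial (Fin 5) (ZMod 2) := X 1

/-- `y12`, the degree-12 generator of the mod 2 cohomology ring of EVI. -/
noncomputable def y12 : MvPolynomial (Fin 5) (ZMod 2) := X 2

/-- `y16`, the degree-16 generator of the mod 2 cohomology ring of EVI. -/
noncomputable def y16 : MvPolynomial (Fin 5) (ZMod 2) := X 3

/-- `y20`, the degree-20 generator of the mod 2 cohomology ring of EVI. -/
noncomputable def y20 : MvPolynomial (Fin 5) (ZMod 2) := X 4

/-- The ideal of the twelve relations in the mod 2 cohomology ring of EVI (Nakagawa). -/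
noncomputable def J : Ideal (MvPolynomial (Fin 5) (ZMod 2)) :=
  Ideal.span
    { y3 ^ 3,
      y16 * y2 + y12 * y3 ^ 2 + y2 ^ 6 * y3 ^ 2,
      y16 * y3,
      y12 ^ 2 * y2 + y12 * y2 ^ 4 * y3 ^ 2 + y20 * y3 ^ 2,
      y12 ^ 2 * y3,
      y12 * y16 + y2 ^ 14 + y12 * y2 ^ 5 * y3 ^ 2 + y2 ^ 11 * y3 ^ 2,
      y12 ^ 3 + y16 * y20 + y2 ^ 5 * y20 * y3 ^ 2,
      y12 ^ 2 * y16 + y20 ^ 2 + y12 * y2 ^ 11 * y3 ^ 2,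
      y12 ^ 2 * y20 + y12 * y2 ^ 13 * y3 ^ 2 + y12 * y2 ^ 3 * y20 * y3 ^ 2,
      y12 * y16 ^ 2 + y12 * y2 ^ 13 * y3 ^ 2,
      y16 ^ 3 + y12 * y16 * y20 + y12 * y2 ^ 5 * y20 * y3 ^ 2,
      y16 ^ 2 * y20 + y2 ^ 13 * y20 * y3 ^ 2 }


section Relations

variable {R : Type*} [CommRing R] {x2 x3 x12 x16 x20 : R}

theorem pow_four_eq_of_relations (h3 : x16 * x3 = 0)
    (h10 : x12 * x16 ^ 2 + x12 * x2 ^ 13 * x3 ^ 2 = 0)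
    (h11 : x16 ^ 3 + x12 * x16 * x20 + x12 * x2 ^ 5 * x20 * x3 ^ 2 = 0) :
    x16 ^ 4 = x12 * x2 ^ 13 * x3 ^ 2 * x20 := by
  linear_combination x16 * h11 - x20 * h10 - x12 * x2 ^ 5 * x20 * x3 * h3

theorem sq_mul_pow_three_eq_of_relations (h3 : x16 * x3 = 0)
    (h8 : x12 ^ 2 * x16 + x20 ^ 2 + x12 * x2 ^ 11 * x3 ^ 2 = 0)
    (h9 : x12 ^ 2 * x20 + x12 * x2 ^ 13 * x3 ^ 2 + x12 * x2 ^ 3 * x20 * x3 ^ 2 = 0) :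
    x2 ^ 2 * x20 ^ 3 = -(x12 * x2 ^ 13 * x3 ^ 2 * x20) := by
  linear_combination x2 ^ 2 * x20 * h8 - x2 ^ 2 * x16 * h9
    + x12 * x2 ^ 5 * x3 * (x2 ^ 10 + x20) * h3

end Relations

theorem stmt_12 : y16 ^ 4 + y2 ^ 2 * y20 ^ 3 ∈ J := by
  have rel {r : MvPolynomial (Fin 5) (ZMod 2)} (hr : r ∈ J) : Ideal.Quotient.mk J r = 0 :=
    Ideal.Quotient.eq_zero_iff_mem.mpr hr
  have h3 := rel (r := y16 * y3) (Ideal.subset_span (by simp))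
  have h8 := rel (r := y12 ^ 2 * y16 + y20 ^ 2 + y12 * y2 ^ 11 * y3 ^ 2)
    (Ideal.subset_span (by simp))
  have h9 := rel (r := y12 ^ 2 * y20 + y12 * y2 ^ 13 * y3 ^ 2 + y12 * y2 ^ 3 * y20 * y3 ^ 2)
    (Ideal.subset_span (by simp))
  have h10 := rel (r := y12 * y16 ^ 2 + y12 * y2 ^ 13 * y3 ^ 2) (Ideal.subset_span (by simp))
  have h11 := rel (r := y16 ^ 3 + y12 * y16 * y20 + y12 * y2 ^ 5 * y20 * y3 ^ 2)
    (Ideal.subset_span (by simp))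
  simp only [map_add, map_mul, map_pow] at h3 h8 h9 h10 h11
  rw [← Ideal.Quotient.eq_zero_iff_mem, map_add, map_mul, map_pow, map_pow, map_pow,
    pow_four_eq_of_relations h3 h10 h11, sq_mul_pow_three_eq_of_relations h3 h8 h9, add_neg_cancel]
end

section
/- Let S = (ℤ/2)[y2, y3, y12, y16, y20] be the polynomial ring over the field with two elements in five variables, and let J ⊆ S be the ideal generated by the twelve elements: y3^3; y16·y2 + y12·y3^2 + y2^6·y3^2; y16·y3; y12^2·y2 + y12·y2^4·y3^2 + y20·y3^2; y12^2·y3; y12·y16 + y2^14 + y12·y2^5·y3^2 + y2^11·y3^2; y12^3 + y16·y20 + y2^5·y20·y3^2; y12^2·y16 + y20^2 + y12·y2^11·y3^2; y12^2·y20 + y12·y2^13·y3^2 + y12·y2^3·y20·y3^2; y12·y16^2 + y12·y2^13·y3^2; y16^3 + y12·y16·y20 + y12·y2^5·y20·y3^2; y16^2·y20 + y2^13·y20·y3^2. Then all four of the following hold: y2^22·y20 ∈ J, y2^16·y3^4·y20 ∈ J, y2^4·y3^4·y12^2·y20 ∈ J, and y2^6·y12·y20^2 ∈ J. -/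
/-! Pass to the quotient ring. The middle two monomials are multiples of `y3 ^ 3`. For the other
two, the relations suffice in any commutative ring, with no use of characteristic 2: multiplying
the sixth relation by `y3 ^ 2` gives `y2 ^ 14 * y3 ^ 2 = 0` modulo `y3 ^ 3` and `y16 * y3`;
expanding `y2 ^ 22 * y20` by the sixth relation and then `y2 * y16` by the second, the two terms
`y2 ^ 13 * y3 ^ 2 * y12 * y20` cancel and every remaining term contains `y12 ^ 2 * y3` or
`y2 ^ 14 * y3 ^ 2`. Likewise `y2 ^ 6 * y12 * y20 ^ 2` reduces, by the eighth and second
relations, to multiples of `y12 ^ 2 * y3`. -/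

open MvPolynomial

section

variable {R : Type*} [CommRing R] {x₂ x₃ x₁₂ x₁₆ x₂₀ : R}

theorem pow_fourteen_mul_sq_eq_zero (h₁ : x₃ ^ 3 = 0) (h₃ : x₁₆ * x₃ = 0)
    (h₆ : x₁₂ * x₁₆ + x₂ ^ 14 + x₁₂ * x₂ ^ 5 * x₃ ^ 2 + x₂ ^ 11 * x₃ ^ 2 = 0) :
    x₂ ^ 14 * x₃ ^ 2 = 0 := by
  linear_combination x₃ ^ 2 * h₆ - x₁₂ * x₃ * h₃ - (x₁₂ * x₂ ^ 5 + x₂ ^ 11) * x₃ * h₁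

theorem pow_twentytwo_mul_eq_zero (h₁ : x₃ ^ 3 = 0)
    (h₂ : x₁₆ * x₂ + x₁₂ * x₃ ^ 2 + x₂ ^ 6 * x₃ ^ 2 = 0) (h₃ : x₁₆ * x₃ = 0)
    (h₅ : x₁₂ ^ 2 * x₃ = 0)
    (h₆ : x₁₂ * x₁₆ + x₂ ^ 14 + x₁₂ * x₂ ^ 5 * x₃ ^ 2 + x₂ ^ 11 * x₃ ^ 2 = 0) :
    x₂ ^ 22 * x₂₀ = 0 := by
  linear_combination x₂ ^ 8 * x₂₀ * h₆ - x₂ ^ 7 * x₁₂ * x₂₀ * h₂ + x₂ ^ 7 * x₃ * x₂₀ * h₅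
    - x₂ ^ 5 * x₂₀ * pow_fourteen_mul_sq_eq_zero h₁ h₃ h₆

theorem pow_six_mul_mul_sq_eq_zero (h₂ : x₁₆ * x₂ + x₁₂ * x₃ ^ 2 + x₂ ^ 6 * x₃ ^ 2 = 0)
    (h₅ : x₁₂ ^ 2 * x₃ = 0) (h₈ : x₁₂ ^ 2 * x₁₆ + x₂₀ ^ 2 + x₁₂ * x₂ ^ 11 * x₃ ^ 2 = 0) :
    x₂ ^ 6 * x₁₂ * x₂₀ ^ 2 = 0 := by
  linear_combination x₂ ^ 6 * x₁₂ * h₈ - x₂ ^ 5 * x₁₂ ^ 3 * h₂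
    + (x₂ ^ 5 * x₁₂ ^ 2 * x₃ + x₂ ^ 11 * x₁₂ * x₃ - x₂ ^ 17 * x₃) * h₅

end

theorem stmt_18 :
    y2 ^ 22 * y20 ∈ J ∧ y2 ^ 16 * y3 ^ 4 * y20 ∈ J ∧
      y2 ^ 4 * y3 ^ 4 * y12 ^ 2 * y20 ∈ J ∧ y2 ^ 6 * y12 * y20 ^ 2 ∈ J := by
  simp only [← Ideal.Quotient.eq_zero_iff_mem, map_mul, map_pow]
  set π := Ideal.Quotient.mk J
  have h₁ : π y3 ^ 3 = 0 := by
    rw [← map_pow, Ideal.Quotient.eq_zero_iff_mem]; exact Ideal.subset_span (by simp)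
  refine ⟨pow_twentytwo_mul_eq_zero (x₁₂ := π y12) (x₁₆ := π y16) h₁ ?_ ?_ ?_ ?_,
    by linear_combination π y2 ^ 16 * π y3 * π y20 * h₁,
    by linear_combination π y2 ^ 4 * π y3 * π y12 ^ 2 * π y20 * h₁,
    pow_six_mul_mul_sq_eq_zero (x₃ := π y3) (x₁₆ := π y16) ?_ ?_ ?_⟩
  all_goals
    simp only [π, ← map_pow, ← map_mul, ← map_add, Ideal.Quotient.eq_zero_iff_mem]
    exact Ideal.subset_span (by simp)
end
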